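/- The quartic x^4 + 331531596 x^3 − 429878960946 x^2 + 109873509788637459 x + 20919104368024767633 has exactly two real roots, and its Galois group over ℚ acts transitively on its four roots. -/

import Mathlib

open Polynomial

/-- The quartic minimal polynomial of `j((1+i√39)/2)`. -/
noncomputable def P : ℚ[X] :=
  X ^ 4 + C (331531596 : ℚ) * X ^ 3 - C (429878960946 : ℚ) * X ^ 2
    + C (109873509788637459 : ℚ) * X + C (20919104368024767633 : ℚ)

/-! ### Irreducibility of `P` via reduction mod 2 -/

lemma Quartic.zmod2_ne (c : ZMod 2) (h : c ≠ 0) : c = 1 := by revert h; revert c; decide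

lemma Quartic.q2_natDegree : (X ^ 4 + X + 1 : (ZMod 2)[X]).natDegree = 4 := by compute_degree!

lemma Quartic.q2_monic : (X ^ 4 + X + 1 : (ZMod 2)[X]).Monic := by monicity!

lemma Quartic.q2_no_root (z : ZMod 2) : eval z (X ^ 4 + X + 1 : (ZMod 2)[X]) ≠ 0 := by
  rcases (by decide : ∀ w : ZMod 2, w = 0 ∨ w = 1) z with rfl | rfl <;> simp <;> decide

lemma Quartic.monic_of_factor {a b : (ZMod 2)[X]} (h : (X ^ 4 + X + 1 : (ZMod 2)[X]) = a * b)
    (ha : a ≠ 0) : a.Monic := by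
  have h1 : a.leadingCoeff * b.leadingCoeff = 1 := by
    rw [← leadingCoeff_mul, ← h]; exact Quartic.q2_monic
  exact Quartic.zmod2_ne _ (leadingCoeff_ne_zero.mpr ha)

lemma Quartic.quad_eq {a : (ZMod 2)[X]} (hm : a.Monic) (hd : a.natDegree = 2)
    (h0 : a.coeff 0 ≠ 0) (h1 : a.coeff 1 ≠ 0) : a = X ^ 2 + X + 1 := by
  have hc2 : a.coeff 2 = 1 := by have := hm.coeff_natDegree; rwa [hd] at this
  have hc0 : a.coeff 0 = 1 := Quartic.zmod2_ne _ h0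
  have hc1 : a.coeff 1 = 1 := Quartic.zmod2_ne _ h1
  have := a.as_sum_range' 3 (by omega)
  rw [this, Finset.sum_range_succ, Finset.sum_range_succ, Finset.sum_range_succ,
    Finset.sum_range_zero, hc0, hc1, hc2]
  simp [monomial_one_right_eq_X_pow]
  ring

lemma Quartic.sq_ne : (X ^ 4 + X + 1 : (ZMod 2)[X]) ≠ (X ^ 2 + X + 1) * (X ^ 2 + X + 1) := by
  intro h
  have h2 : ((X ^ 2 + X + 1) * (X ^ 2 + X + 1) : (ZMod 2)[X])
      = X ^ 4 + 2 * X ^ 3 + 3 * X ^ 2 + 2 * X + 1 := by ring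
  have h3 : (2 : (ZMod 2)[X]) = 0 := by
    rw [← map_ofNat (C : ZMod 2 →+* (ZMod 2)[X]) 2,
      show (OfNat.ofNat 2 : ZMod 2) = 0 by decide, map_zero]
  have h4 : (3 : (ZMod 2)[X]) = 1 := by
    rw [← map_ofNat (C : ZMod 2 →+* (ZMod 2)[X]) 3,
      show (OfNat.ofNat 3 : ZMod 2) = 1 by decide, map_one]
  rw [h2, h3, h4] at h
  have := congrArg (fun p => coeff p 1) h
  simp [coeff_X_pow] at this

lemma Quartic.q2_irred : Irreducible (X ^ 4 + X + 1 : (ZMod 2)[X]) := by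
  constructor
  · intro hu
    have := natDegree_eq_zero_of_isUnit hu
    rw [Quartic.q2_natDegree] at this; omega
  · intro a b h
    by_contra hab
    push_neg at hab
    obtain ⟨hua, hub⟩ := hab
    have hq0 : (X ^ 4 + X + 1 : (ZMod 2)[X]) ≠ 0 := Quartic.q2_monic.ne_zero
    have ha0 : a ≠ 0 := by rintro rfl; simp at h; exact hq0 h
    have hb0 : b ≠ 0 := by rintro rfl; simp at h; exact hq0 h
    have hma : a.Monic := Quartic.monic_of_factor h ha0
    have hmb : b.Monic := Quartic.monic_of_factor (by rw [h, mul_comm]) hb0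
    have hdeg : a.natDegree + b.natDegree = 4 := by
      rw [← natDegree_mul ha0 hb0, ← h, Quartic.q2_natDegree]
    have hda : 1 ≤ a.natDegree := by
      by_contra hh
      push_neg at hh
      interval_cases hda : a.natDegree
      · exact hua (hma.natDegree_eq_zero.mp hda ▸ isUnit_one)
    have hdb : 1 ≤ b.natDegree := by
      by_contra hh
      push_neg at hh
      interval_cases hdb : b.natDegree
      · exact hub (hmb.natDegree_eq_zero.mp hdb ▸ isUnit_one)
    have noroot : ∀ z : ZMod 2, eval z a ≠ 0 ∧ eval z b ≠ 0 := by
      intro z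
      constructor <;> intro hz <;> apply Quartic.q2_no_root z <;> rw [h, eval_mul]
      · rw [hz, zero_mul]
      · rw [hz, mul_zero]
    have hd1 : ∀ c : (ZMod 2)[X], c.Monic → (∀ z, eval z c ≠ 0) → c.natDegree ≠ 1 := by
      intro c hmc hnr hd1
      have := hmc.eq_X_add_C hd1
      apply hnr (-(c.coeff 0))
      rw [this]; simp
      generalize c.coeff 0 = t; revert t; decide
    have hda1 : a.natDegree ≠ 1 := hd1 a hma (fun z => (noroot z).1)
    have hdb1 : b.natDegree ≠ 1 := hd1 b hmb (fun z => (noroot z).2)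
    have hda2 : a.natDegree = 2 := by omega
    have hdb2 : b.natDegree = 2 := by omega
    have ea : a = X ^ 2 + X + 1 := by
      apply Quartic.quad_eq hma hda2
      · intro hc; apply (noroot 0).1
        have := a.as_sum_range' 3 (by omega)
        rw [this]; simp [Finset.sum_range_succ, hc]
      · intro hc
        apply (noroot 1).1
        have := a.as_sum_range' 3 (by omega)
        rw [this]
        simp [Finset.sum_range_succ, hc]
        have hc2 : a.coeff 2 = 1 := by have := hma.coeff_natDegree; rwa [hda2] at this
        have hc0 : a.coeff 0 = 1 := Quartic.zmod2_ne _ (by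
          intro h0; apply (noroot 0).1
          have := a.as_sum_range' 3 (by omega)
          rw [this]; simp [Finset.sum_range_succ, h0])
        rw [hc0, hc2]; decide
    have eb : b = X ^ 2 + X + 1 := by
      apply Quartic.quad_eq hmb hdb2
      · intro hc; apply (noroot 0).2
        have := b.as_sum_range' 3 (by omega)
        rw [this]; simp [Finset.sum_range_succ, hc]
      · intro hc
        apply (noroot 1).2
        have := b.as_sum_range' 3 (by omega)
        rw [this]
        simp [Finset.sum_range_succ, hc]
        have hc2 : b.coeff 2 = 1 := by have := hmb.coeff_natDegree; rwa [hdb2] at this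
        have hc0 : b.coeff 0 = 1 := Quartic.zmod2_ne _ (by
          intro h0; apply (noroot 0).2
          have := b.as_sum_range' 3 (by omega)
          rw [this]; simp [Finset.sum_range_succ, h0])
        rw [hc0, hc2]; decide
    exact Quartic.sq_ne (by rw [h, ea, eb])

/-- The integer version of `P`. -/
noncomputable def Quartic.Pz : ℤ[X] :=
  X ^ 4 + C (331531596 : ℤ) * X ^ 3 - C (429878960946 : ℤ) * X ^ 2
    + C (109873509788637459 : ℤ) * X + C (20919104368024767633 : ℤ)

lemma Quartic.Pz_monic : Quartic.Pz.Monic := by unfold Quartic.Pz; monicity!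

lemma Quartic.Pz_map2 : Quartic.Pz.map (Int.castRingHom (ZMod 2)) = X ^ 4 + X + 1 := by
  unfold Quartic.Pz
  simp only [Polynomial.map_add, Polynomial.map_sub, Polynomial.map_mul, Polynomial.map_pow,
    map_X, map_C]
  rw [show (Int.castRingHom (ZMod 2)) 331531596 = 0 by decide,
    show (Int.castRingHom (ZMod 2)) 429878960946 = 0 by decide,
    show (Int.castRingHom (ZMod 2)) 109873509788637459 = 1 by decide,
    show (Int.castRingHom (ZMod 2)) 20919104368024767633 = 1 by decide]
  simp

lemma Quartic.Pz_irred : Irreducible Quartic.Pz :=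
  Quartic.Pz_monic.irreducible_of_irreducible_map (Int.castRingHom (ZMod 2)) Quartic.Pz
    (by rw [Quartic.Pz_map2]; exact Quartic.q2_irred)

lemma Quartic.P_eq_map : P = Quartic.Pz.map (Int.castRingHom ℚ) := by
  unfold P Quartic.Pz
  simp only [Polynomial.map_add, Polynomial.map_sub, Polynomial.map_mul, Polynomial.map_pow,
    map_X, map_C]
  norm_num

lemma Quartic.P_irred : Irreducible P := by
  rw [Quartic.P_eq_map]
  exact (IsPrimitive.Int.irreducible_iff_irreducible_map_cast
    Quartic.Pz_monic.isPrimitive).mp Quartic.Pz_irred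

/-! ### The real roots -/

/-- The real polynomial function of `P`. -/
noncomputable def Quartic.g : ℝ → ℝ := fun x =>
  x ^ 4 + 331531596 * x ^ 3 - 429878960946 * x ^ 2 + 109873509788637459 * x
    + 20919104368024767633

/-- The derivative of `Quartic.g`. -/
noncomputable def Quartic.g' : ℝ → ℝ := fun x =>
  4 * x ^ 3 + 994594788 * x ^ 2 - 859757921892 * x + 109873509788637459

lemma Quartic.hasDeriv (x : ℝ) : HasDerivAt Quartic.g (Quartic.g' x) x := by
  unfold Quartic.g Quartic.g'
  have h := ((((hasDerivAt_pow 4 x).add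
    ((hasDerivAt_pow 3 x).const_mul 331531596)).sub
    ((hasDerivAt_pow 2 x).const_mul 429878960946)).add
    ((hasDerivAt_id x).const_mul 109873509788637459)).add_const 20919104368024767633
  exact h.congr_deriv (by norm_num; ring)

lemma Quartic.gcont : Continuous Quartic.g := by
  unfold Quartic.g; continuity

lemma Quartic.gderiv_neg {x : ℝ} (hx : x ≤ -300000000) : Quartic.g' x < 0 := by
  unfold Quartic.g'
  nlinarith [mul_nonneg (mul_nonneg (by linarith : (0:ℝ) ≤ -300000000 - x)
      (by linarith : (0:ℝ) ≤ -300000000 - x)) (by linarith : (0:ℝ) ≤ -300000000 - x),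
    mul_nonneg (by linarith : (0:ℝ) ≤ -300000000 - x) (by linarith : (0:ℝ) ≤ -300000000 - x),
    hx]

lemma Quartic.gderiv_pos {x : ℝ} (hx : -200000000 ≤ x) : 0 < Quartic.g' x := by
  unfold Quartic.g'
  nlinarith [mul_nonneg (by linarith : (0:ℝ) ≤ x + 200000000) (sq_nonneg (x - 432)),
    sq_nonneg (194598244 * x - 84279334194), sq_nonneg (x - 432)]

lemma Quartic.g_neg_mid {x : ℝ} (h1 : -300000000 ≤ x) (h2 : x ≤ -200000000) :
    Quartic.g x < 0 := by
  unfold Quartic.g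
  nlinarith [mul_nonneg (mul_nonneg (sq_nonneg (x - 84234202))
      (by linarith : (0:ℝ) ≤ x + 300000000)) (by linarith : (0:ℝ) ≤ -(x + 200000000)),
    mul_nonneg (by linarith : (0:ℝ) ≤ x + 300000000) (by linarith : (0:ℝ) ≤ -(x + 200000000))]

lemma Quartic.g_anti : StrictAntiOn Quartic.g (Set.Iic (-300000000)) := by
  apply strictAntiOn_of_deriv_neg (convex_Iic _) Quartic.gcont.continuousOn
  intro x hx
  rw [interior_Iic] at hx
  rw [(Quartic.hasDeriv x).deriv]
  exact Quartic.gderiv_neg hx.le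

lemma Quartic.g_mono : StrictMonoOn Quartic.g (Set.Ici (-200000000)) := by
  apply strictMonoOn_of_deriv_pos (convex_Ici _) Quartic.gcont.continuousOn
  intro x hx
  rw [interior_Ici] at hx
  rw [(Quartic.hasDeriv x).deriv]
  exact Quartic.gderiv_pos hx.le

lemma Quartic.g_card : {x : ℝ | Quartic.g x = 0}.ncard = 2 := by
  have e1 : Quartic.g (-400000000) > 0 := by unfold Quartic.g; norm_num
  have e2 : Quartic.g (-300000000) < 0 := by unfold Quartic.g; norm_num
  have e3 : Quartic.g (-200000000) < 0 := by unfold Quartic.g; norm_num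
  have e4 : Quartic.g 0 > 0 := by unfold Quartic.g; norm_num
  obtain ⟨x1, hx1m, hx1⟩ := intermediate_value_Icc' (by norm_num : (-400000000:ℝ) ≤ -300000000)
    Quartic.gcont.continuousOn
    (by constructor <;> linarith :
      (0:ℝ) ∈ Set.Icc (Quartic.g (-300000000)) (Quartic.g (-400000000)))
  obtain ⟨x2, hx2m, hx2⟩ := intermediate_value_Icc (by norm_num : (-200000000:ℝ) ≤ 0)
    Quartic.gcont.continuousOn
    (by constructor <;> linarith : (0:ℝ) ∈ Set.Icc (Quartic.g (-200000000)) (Quartic.g 0))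
  have hne : x1 ≠ x2 := by
    intro h; rw [h] at hx1m; have := hx1m.2; have := hx2m.1; linarith
  have hset : {x : ℝ | Quartic.g x = 0} = {x1, x2} := by
    ext x
    simp only [Set.mem_setOf_eq, Set.mem_insert_iff, Set.mem_singleton_iff]
    constructor
    · intro hx
      rcases le_or_gt x (-300000000) with h | h
      · left
        exact Quartic.g_anti.injOn h hx1m.2 (by rw [hx, hx1])
      · rcases le_or_gt x (-200000000) with h2 | h2
        · exact absurd hx (by have := Quartic.g_neg_mid h.le h2; linarith)
        · right
          exact Quartic.g_mono.injOn h2.le hx2m.1 (by rw [hx, hx2])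
    · rintro (rfl | rfl)
      · exact hx1
      · exact hx2
  rw [hset, Set.ncard_pair hne]

lemma Quartic.aeval_eq_g (x : ℝ) : aeval x P = Quartic.g x := by
  simp only [P, Quartic.g, map_add, map_sub, map_mul, map_pow, aeval_X, aeval_C]
  norm_num

/-- The quartic has exactly two real roots, and its Galois group acts transitively on its
roots (in its splitting field). -/
theorem quartic_real_roots_and_transitive :
    {x : ℝ | aeval x P = 0}.ncard = 2 ∧
    (∀ x y : P.SplittingField, aeval x P = 0 → aeval y P = 0 →
      ∃ σ : P.SplittingField ≃ₐ[ℚ] P.SplittingField, σ x = y) := by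
  constructor
  · have : {x : ℝ | aeval x P = 0} = {x : ℝ | Quartic.g x = 0} := by
      ext x; simp [Quartic.aeval_eq_g]
    rw [this]
    exact Quartic.g_card
  · intro x y hx hy
    have hmx := minpoly.eq_of_irreducible Quartic.P_irred hx
    have hmy := minpoly.eq_of_irreducible Quartic.P_irred hy
    have heq : minpoly ℚ y = minpoly ℚ x := by rw [← hmx, ← hmy]
    obtain ⟨σ, hσ⟩ := (Normal.minpoly_eq_iff_mem_orbit (F := ℚ) (h := Polynomial.SplittingField.instNormal P)).mp heq
    exact ⟨σ, hσ⟩
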